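/- Consider a deterministic inhomogeneous cellular automaton on ℤ in which each cell j has a rule φ_j belonging to {φ3, φ6, φ9, φ12}. Fix a cell i and a time t ≥ 1. If x(0) and x̃(0) are two initial configurations that agree at all positions j with i−t+2 ≤ j ≤ i+t, then the evolutions x and x̃ under the same rules satisfy x_i(t) XOR x_{i−t}(0) = x̃_i(t) XOR x̃_{i−t}(0). In other words, x_i(t) XOR x_{i−t}(0) is determined by the values x_{i−t+2}(0), …, x_{i+t}(0) and the rules φ_{i−t+1}, …, φ_{i+t−1}. -/
import Mathlib


/-- A Boolean rule: a function `{0,1} × {0,1} → {0,1}`. -/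
abbrev Rule : Type := Bool → Bool → Bool

/-- The rule `φ3(x,y) = 1 - x`. -/
def phi3 : Rule := fun x _ => !x
/-- The rule `φ6(x,y) = x + y mod 2`. -/
def phi6 : Rule := fun x y => xor x y
/-- The rule `φ9(x,y) = x + y + 1 mod 2`. -/
def phi9 : Rule := fun x y => !(xor x y)
/-- The rule `φ12(x,y) = x`. -/
def phi12 : Rule := fun x _ => x

/-- Evolution of an inhomogeneous cellular automaton on ℤ:
`x_i(t+1) = φ_i(x_{i-1}(t), x_{i+1}(t))`. -/
def evolveZ (φ : ℤ → Rule) (x0 : ℤ → Bool) : ℕ → ℤ → Bool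
  | 0 => x0
  | t+1 => fun i => φ i (evolveZ φ x0 t (i-1)) (evolveZ φ x0 t (i+1))

lemma rule_form (φ : ℤ → Rule)
    (hφ : ∀ j : ℤ, φ j ∈ ({phi3, phi6, phi9, phi12} : Set Rule)) (j : ℤ) :
    ∃ f : Bool → Bool, ∀ a b, φ j a b = xor a (f b) := by
  have h := hφ j
  simp only [Set.mem_insert_iff, Set.mem_singleton_iff] at h
  rcases h with h | h | h | h
  · exact ⟨fun _ => true, fun a b => by simp [h, phi3]⟩
  · exact ⟨fun b => b, fun a b => by simp [h, phi6]⟩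
  · exact ⟨fun b => !b, fun a b => by cases a <;> cases b <;> simp [h, phi9]⟩
  · exact ⟨fun _ => false, fun a b => by simp [h, phi12]⟩

lemma cone (φ : ℤ → Rule) (x0 x0' : ℤ → Bool) :
    ∀ (t : ℕ) (i : ℤ), (∀ j : ℤ, i - t ≤ j → j ≤ i + t → x0 j = x0' j) →
      evolveZ φ x0 t i = evolveZ φ x0' t i := by
  intro t
  induction t with
  | zero => intro i h; exact h i (by simp) (by simp)
  | succ t ih =>
    intro i h
    simp only [evolveZ]
    rw [ih (i-1) ?_, ih (i+1) ?_] <;> intro j h1 h2 <;> apply h j <;> push_cast at * <;> omega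

lemma key (φ : ℤ → Rule)
    (hφ : ∀ j : ℤ, φ j ∈ ({phi3, phi6, phi9, phi12} : Set Rule)) (x0 x0' : ℤ → Bool) :
    ∀ (t : ℕ) (i : ℤ), (∀ j : ℤ, i - t + 2 ≤ j → j ≤ i + t → x0 j = x0' j) →
      xor (evolveZ φ x0 t i) (x0 (i - t)) = xor (evolveZ φ x0' t i) (x0' (i - t)) := by
  intro t
  induction t with
  | zero => intro i _; simp [evolveZ]
  | succ t ih =>
    intro i h
    obtain ⟨f, hf⟩ := rule_form φ hφ i
    have h1 : xor (evolveZ φ x0 t (i-1)) (x0 (i-1-t)) =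
        xor (evolveZ φ x0' t (i-1)) (x0' (i-1-t)) := by
      apply ih; intro j ha hb; apply h j <;> push_cast at * <;> omega
    have h2 : evolveZ φ x0 t (i+1) = evolveZ φ x0' t (i+1) := by
      apply cone; intro j ha hb; apply h j <;> push_cast at * <;> omega
    have hc : i - ((t : ℤ)+1) = i - 1 - t := by ring
    simp only [evolveZ, hf, Nat.cast_add, Nat.cast_one, hc, h2]
    rw [show ∀ a b c : Bool, xor (xor a b) c = xor (xor a c) b from by decide, h1,
      ← show ∀ a b c : Bool, xor (xor a b) c = xor (xor a c) b from by decide]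

/-- for a deterministic inhomogeneous CA on ℤ whose rules all lie in
`{φ3, φ6, φ9, φ12}`, for a fixed cell `i` and time `t ≥ 1`, if two initial configurations
agree on all positions `j` with `i - t + 2 ≤ j ≤ i + t`, then
`x_i(t) XOR x_{i-t}(0) = x̃_i(t) XOR x̃_{i-t}(0)`. -/
theorem stmt11 (φ : ℤ → Rule) (hφ : ∀ j : ℤ, φ j ∈ ({phi3, phi6, phi9, phi12} : Set Rule))
    (i : ℤ) (t : ℕ) (ht : 1 ≤ t) (x0 x0' : ℤ → Bool)
    (hagree : ∀ j : ℤ, i - t + 2 ≤ j → j ≤ i + t → x0 j = x0' j) :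
    xor (evolveZ φ x0 t i) (x0 (i - t)) = xor (evolveZ φ x0' t i) (x0' (i - t)) := by
  exact key φ hφ x0 x0' t i hagree
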